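/- Let K be an algebraically closed field containing ℂ with a surjective valuation v : K* → ℝ whose valuation ring contains O-convexity compatible norm, and let τ = -v. For A ∈ GL_{n+1}(K) with eigenvalues λ₁, …, λ_{n+1} ordered by decreasing τ(|λ_i|), the translation length l(A) = inf_x d(x, Ax) of the action of A on the space of homothety classes of full-rank O-lattices (with the tropical Hilbert metric) is attained and equals τ(|λ₁/λ_{n+1}|). -/

import Mathlib

open Matrix Polynomial Finset

set_option maxHeartbeats 1000000

section Tau
variable {K : Type*} [Field K] (τ : K → WithBot ℝ)

lemma tau_one (hzero : ∀ z : K, τ z = ⊥ ↔ z = 0)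
    (hmul : ∀ z w : K, τ (z * w) = τ z + τ w) : τ (1 : K) = 0 := by
  have h := hmul 1 1
  rw [one_mul] at h
  cases hc : τ (1 : K) with
  | bot => exact absurd ((hzero 1).1 hc) one_ne_zero
  | coe r =>
    rw [hc, ← WithBot.coe_add, WithBot.coe_inj] at h
    have : r = 0 := by linarith
    rw [this]; rfl

lemma tau_inv (hzero : ∀ z : K, τ z = ⊥ ↔ z = 0)
    (hmul : ∀ z w : K, τ (z * w) = τ z + τ w) {z : K} (hz : z ≠ 0) {r : ℝ}
    (hr : τ z = (r : WithBot ℝ)) : τ z⁻¹ = ((-r : ℝ) : WithBot ℝ) := by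
  have h := hmul z z⁻¹
  rw [mul_inv_cancel₀ hz, tau_one τ hzero hmul, hr] at h
  cases hc : τ z⁻¹ with
  | bot => exact absurd (inv_eq_zero.1 ((hzero _).1 hc)) hz
  | coe s =>
    rw [hc] at h
    have hrs : (0:ℝ) = r + s := by exact_mod_cast h
    rw [WithBot.coe_inj]; linarith

lemma tau_sum_le {ι : Type*} (hzero : ∀ z : K, τ z = ⊥ ↔ z = 0)
    (hadd : ∀ z w : K, τ (z + w) ≤ max (τ z) (τ w)) (s : Finset ι) (f : ι → K) :
    τ (∑ i ∈ s, f i) ≤ s.sup fun i => τ (f i) := by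
  classical
  induction s using Finset.induction with
  | empty => simp [(hzero 0).2 rfl]
  | insert _ _ h ih =>
    rw [Finset.sum_insert h, Finset.sup_insert]
    exact le_trans (hadd _ _) (max_le_max le_rfl ih)

lemma tau_eig_le {n : ℕ} (hzero : ∀ z : K, τ z = ⊥ ↔ z = 0)
    (hmul : ∀ z w : K, τ (z * w) = τ z + τ w)
    (hadd : ∀ z w : K, τ (z + w) ≤ max (τ z) (τ w))
    (M : Matrix (Fin (n+1)) (Fin (n+1)) K)
    (μ : K) (v : Fin (n+1) → K) (hv : v ≠ 0) (heig : M.mulVec v = μ • v) :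
    τ μ ≤ univ.sup fun p : Fin (n+1) × Fin (n+1) => τ (M p.1 p.2) := by
  obtain ⟨i, -, hi⟩ := Finset.exists_max_image univ (fun i => τ (v i)) ⟨0, mem_univ 0⟩
  obtain ⟨k, hk⟩ : ∃ k, v k ≠ 0 := by
    by_contra h
    push_neg at h
    exact hv (funext fun k => h k)
  have hvi : τ (v i) ≠ ⊥ := by
    intro h
    exact hk ((hzero _).1 (le_bot_iff.1 (h ▸ hi k (mem_univ k))))
  have key : τ μ + τ (v i) ≤ (univ.sup fun p : Fin (n+1) × Fin (n+1) => τ (M p.1 p.2)) + τ (v i) := by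
    calc τ μ + τ (v i) = τ (μ * v i) := (hmul _ _).symm
      _ = τ ((M.mulVec v) i) := by rw [heig]; simp
      _ = τ (∑ j, M i j * v j) := by simp [Matrix.mulVec, dotProduct]
      _ ≤ univ.sup fun j => τ (M i j * v j) := tau_sum_le τ hzero hadd _ _
      _ ≤ _ := Finset.sup_le fun j _ => by
          rw [hmul]
          exact add_le_add (Finset.le_sup (f := fun p : Fin (n+1) × Fin (n+1) => τ (M p.1 p.2))
            (mem_univ (i, j))) (hi j (mem_univ j))
  exact (WithBot.add_le_add_iff_right hvi).1 key

end Tau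

section Tri
variable {K : Type*} [Field K]

lemma charpoly_eval_eq_det {n : Type*} [Fintype n] [DecidableEq n]
    (M : Matrix n n K) (t : K) :
    M.charpoly.eval t = (Matrix.diagonal (fun _ => t) - M).det := by
  rw [Matrix.charpoly, ← Polynomial.coe_evalRingHom, RingHom.map_det]
  congr 1
  ext i j
  by_cases h : i = j
  · subst h
    simp [Matrix.charmatrix_apply, Matrix.map_apply]
  · simp [Matrix.charmatrix_apply, Matrix.map_apply, Matrix.diagonal_apply_ne _ h]

lemma exists_eigen {n : ℕ} (M : Matrix (Fin (n+1)) (Fin (n+1)) K) {μ : K}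
    (hroot : M.charpoly.eval μ = 0) : ∃ v : Fin (n+1) → K, v ≠ 0 ∧ M.mulVec v = μ • v := by
  have hdet : (Matrix.diagonal (fun _ => μ) - M).det = 0 := by
    rw [← charpoly_eval_eq_det]; exact hroot
  obtain ⟨v, hv, h0⟩ := (Matrix.exists_mulVec_eq_zero_iff).2 hdet
  refine ⟨v, hv, ?_⟩
  have hd : (Matrix.diagonal (fun _ => μ) - M).mulVec v
      = μ • v - M.mulVec v := by
    rw [Matrix.sub_mulVec]
    congr 1
    funext i
    simp [Matrix.mulVec_diagonal]
  rw [hd, sub_eq_zero] at h0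
  exact h0.symm

private def emb {n : ℕ} (X : Matrix (Fin n) (Fin n) K) : Matrix (Fin (n+1)) (Fin (n+1)) K :=
  Matrix.of (Fin.cons (Fin.cons 1 (fun _ => 0)) (fun i' => Fin.cons 0 (fun j' => X i' j')))

@[simp] private lemma emb_zero_zero {n : ℕ} (X : Matrix (Fin n) (Fin n) K) :
    emb X 0 0 = 1 := rfl

@[simp] private lemma emb_zero_succ {n : ℕ} (X : Matrix (Fin n) (Fin n) K) (j : Fin n) :
    emb X 0 j.succ = 0 := by simp [emb]

@[simp] private lemma emb_succ_zero {n : ℕ} (X : Matrix (Fin n) (Fin n) K) (i : Fin n) :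
    emb X i.succ 0 = 0 := by simp [emb]

@[simp] private lemma emb_succ_succ {n : ℕ} (X : Matrix (Fin n) (Fin n) K) (i j : Fin n) :
    emb X i.succ j.succ = X i j := by simp [emb]

private lemma emb_mul {n : ℕ} (X Y : Matrix (Fin n) (Fin n) K) :
    emb X * emb Y = emb (X * Y) := by
  ext i j
  induction i using Fin.cases with
  | zero =>
    induction j using Fin.cases with
    | zero => simp [Matrix.mul_apply, Fin.sum_univ_succ]
    | succ j => simp [Matrix.mul_apply, Fin.sum_univ_succ]
  | succ i =>
    induction j using Fin.cases with
    | zero => simp [Matrix.mul_apply, Fin.sum_univ_succ]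
    | succ j => simp [Matrix.mul_apply, Fin.sum_univ_succ]

private lemma emb_one {n : ℕ} : emb (1 : Matrix (Fin n) (Fin n) K) = 1 := by
  ext i j
  induction i using Fin.cases with
  | zero =>
    induction j using Fin.cases with
    | zero => simp
    | succ j => simp [Matrix.one_apply, (Fin.succ_ne_zero j).symm]
  | succ i =>
    induction j using Fin.cases with
    | zero => simp [Matrix.one_apply, Fin.succ_ne_zero i]
    | succ j => simp [Matrix.one_apply, Fin.succ_inj]

lemma exists_triangularize [IsAlgClosed K] : ∀ (n : ℕ) (M : Matrix (Fin n) (Fin n) K),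
    ∃ G : Matrix (Fin n) (Fin n) K, IsUnit G.det ∧
      ∀ i j : Fin n, j < i → (G⁻¹ * M * G) i j = 0 := by
  intro n
  induction n with
  | zero => exact fun M => ⟨1, by simp, fun i => i.elim0⟩
  | succ n ih =>
    intro M
    -- find an eigenvalue and eigenvector
    have hdeg : M.charpoly.degree ≠ 0 := by
      rw [Matrix.charpoly_degree_eq_dim]
      simp only [Fintype.card_fin]
      intro h
      have : n + 1 = 0 := by exact_mod_cast h
      omega
    obtain ⟨μ, hμ⟩ := IsAlgClosed.exists_root _ hdeg
    obtain ⟨v, hv, heig⟩ := exists_eigen M hμ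
    -- build a basis whose first vector is v
    have hli : LinearIndepOn K id ({v} : Set (Fin (n+1) → K)) :=
      LinearIndepOn.singleton hv
    let b0 := Module.Basis.extend hli
    let e := b0.indexEquiv (Pi.basisFun K (Fin (n+1)))
    have hvmem : v ∈ hli.extend (Set.subset_univ ({v} : Set (Fin (n+1) → K))) :=
      hli.subset_extend _ rfl
    let i₀ : Fin (n+1) := e ⟨v, hvmem⟩
    let b : Module.Basis (Fin (n+1)) K (Fin (n+1) → K) := (b0.reindex e).reindex (Equiv.swap 0 i₀)
    have hb0 : b 0 = v := by
      show ((b0.reindex e).reindex (Equiv.swap 0 i₀)) 0 = v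
      rw [Module.Basis.reindex_apply, Equiv.symm_swap, Equiv.swap_apply_left, Module.Basis.reindex_apply]
      show b0 (e.symm (e ⟨v, hvmem⟩)) = v
      rw [Equiv.symm_apply_apply]
      exact Module.Basis.extend_apply_self hli ⟨v, hvmem⟩
    -- the matrix of M in this basis
    set N := LinearMap.toMatrix b b (Matrix.mulVecLin M) with hNdef
    set P : Matrix (Fin (n+1)) (Fin (n+1)) K := Matrix.of (fun i j => b j i) with hPdef
    have hP : P = (Pi.basisFun K (Fin (n+1))).toMatrix ⇑b := by
      ext i j
      simp [hPdef, Module.Basis.toMatrix_apply]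
    have : Invertible P := hP ▸ (Pi.basisFun K (Fin (n+1))).invertibleToMatrix b
    have hPu : IsUnit P.det := Matrix.isUnit_det_of_invertible P
    have hMP : M * P = P * N := by
      ext i j
      have hfb : M.mulVec (b j) = ∑ k, N k j • b k := by
        have h1 : ∀ k, N k j = b.repr (M.mulVec (b j)) k := fun k => by
          rw [hNdef, LinearMap.toMatrix_apply, Matrix.mulVecLin_apply]
        rw [show (∑ k, N k j • b k) = ∑ k, b.repr (M.mulVec (b j)) k • b k from
          Finset.sum_congr rfl fun k _ => by rw [h1]]
        exact (b.sum_repr (M.mulVec (b j))).symm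
      calc (M * P) i j = (M.mulVec (b j)) i := by
            simp [Matrix.mul_apply, hPdef, Matrix.mulVec, dotProduct]
        _ = (∑ k, N k j • b k) i := by rw [hfb]
        _ = (P * N) i j := by
            simp only [Matrix.mul_apply, hPdef, Matrix.of_apply, Finset.sum_apply,
              Pi.smul_apply, smul_eq_mul]
            exact Finset.sum_congr rfl fun k _ => mul_comm _ _
    have hNP : N = P⁻¹ * M * P := by
      rw [Matrix.mul_assoc, hMP, ← Matrix.mul_assoc, Matrix.nonsing_inv_mul P hPu, one_mul]
    -- first column of N
    have hcol : ∀ i : Fin n, N i.succ 0 = 0 := by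
      intro i
      rw [hNdef, LinearMap.toMatrix_apply, Matrix.mulVecLin_apply, hb0, heig, ← hb0]
      rw [_root_.map_smul, Module.Basis.repr_self]
      simp [Finsupp.single_apply, (Fin.succ_ne_zero i).symm]
    -- induction hypothesis on the lower-right block
    obtain ⟨H, hHu, hHtri⟩ := ih (N.submatrix Fin.succ Fin.succ)
    set Γ : Matrix (Fin (n+1)) (Fin (n+1)) K := emb H with hΓ
    have hΓright : Γ * emb H⁻¹ = 1 := by
      rw [hΓ, emb_mul, Matrix.mul_nonsing_inv H hHu, emb_one]
    have hΓleft : emb H⁻¹ * Γ = 1 := by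
      rw [hΓ, emb_mul, Matrix.nonsing_inv_mul H hHu, emb_one]
    have hΓu : IsUnit Γ.det := Matrix.isUnit_det_of_right_inverse hΓright
    have hΓinv : Γ⁻¹ = emb H⁻¹ := Matrix.inv_eq_right_inv hΓright
    refine ⟨P * Γ, by rw [Matrix.det_mul]; exact hPu.mul hΓu, ?_⟩
    have hGinv : (P * Γ)⁻¹ = Γ⁻¹ * P⁻¹ := Matrix.mul_inv_rev P Γ
    intro i j hij
    have hconj : (P * Γ)⁻¹ * M * (P * Γ) = Γ⁻¹ * N * Γ := by
      rw [hGinv, hNP]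
      noncomm_ring
    rw [hconj, hΓinv]
    -- now compute the entry
    induction i using Fin.cases with
    | zero => exact absurd hij (Fin.not_lt_zero j)
    | succ i =>
      have hrow : ∀ jj, (emb H⁻¹ * N * Γ) i.succ jj
          = ∑ k, H⁻¹ i k * (N * Γ) k.succ jj := by
        intro jj
        rw [Matrix.mul_assoc, Matrix.mul_apply, Fin.sum_univ_succ]
        simp [hΓ]
      induction j using Fin.cases with
      | zero =>
        rw [hrow]
        refine Finset.sum_eq_zero fun k _ => ?_
        have : (N * Γ) k.succ 0 = 0 := by
          rw [Matrix.mul_apply, Fin.sum_univ_succ, hΓ]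
          simp [hcol k]
        rw [this, mul_zero]
      | succ j =>
        have hjlt : j < i := by
          rwa [Fin.succ_lt_succ_iff] at hij
        rw [hrow]
        have hNΓ : ∀ k : Fin n, (N * Γ) k.succ j.succ
            = ((N.submatrix Fin.succ Fin.succ) * H) k j := by
          intro k
          rw [Matrix.mul_apply, Fin.sum_univ_succ, hΓ, Matrix.mul_apply]
          simp
        calc (∑ k, H⁻¹ i k * (N * Γ) k.succ j.succ)
            = ∑ k, H⁻¹ i k * ((N.submatrix Fin.succ Fin.succ) * H) k j := by
              exact Finset.sum_congr rfl fun k _ => by rw [hNΓ]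
          _ = (H⁻¹ * ((N.submatrix Fin.succ Fin.succ) * H)) i j := by
              rw [Matrix.mul_apply]
          _ = (H⁻¹ * (N.submatrix Fin.succ Fin.succ) * H) i j := by
              rw [Matrix.mul_assoc]
          _ = 0 := hHtri i j hjlt

end Tri

section CP
variable {K : Type*} [Field K]

lemma charpoly_conj {n : Type*} [Fintype n] [DecidableEq n] (G M : Matrix n n K)
    (hG : IsUnit G.det) : (G⁻¹ * M * G).charpoly = M.charpoly := by
  have hGG : G⁻¹ * G = 1 := Matrix.nonsing_inv_mul G hG
  have h1 : Matrix.charmatrix (G⁻¹ * M * G)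
      = (G⁻¹.map C) * Matrix.charmatrix M * (G.map C) := by
    rw [Matrix.charmatrix, Matrix.charmatrix]
    simp only [RingHom.mapMatrix_apply]
    rw [Matrix.mul_sub, Matrix.sub_mul]
    congr 1
    · have hc : (Matrix.scalar n (X : K[X])) * (G.map C) = (G.map C) * Matrix.scalar n X :=
        (Matrix.scalar_commute (X : K[X]) (fun r' => Commute.all _ _) (G.map C)).eq
      rw [Matrix.mul_assoc, hc, ← Matrix.mul_assoc, ← Matrix.map_mul, hGG]
      simp
    · rw [← Matrix.map_mul, ← Matrix.map_mul]
  show (Matrix.charmatrix (G⁻¹ * M * G)).det = (Matrix.charmatrix M).det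
  rw [h1, Matrix.det_mul, Matrix.det_mul]
  have h2 : (G⁻¹.map C).det * (G.map C).det = 1 := by
    rw [← Matrix.det_mul, ← Matrix.map_mul, hGG]
    simp
  rw [mul_right_comm, h2, one_mul]

end CP



/-- Let `K` be an algebraically closed field containing `ℂ` with a surjective
real valuation, written tropically as `τ = -v : K → ℝ ∪ {-∞}`. Let
`A ∈ GL_{n+1}(K)` have eigenvalues `λ₁, …, λ_{n+1}` ordered so that `τ(λ_i)` is
decreasing. The translation length `l(A) = inf_x d(x, Ax)` of the action of `A`
on the space of homothety classes of full-rank `O`-lattices (points given by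
bases, i.e. matrices `G ∈ GL_{n+1}(K)`, with displacement
`d(x, Ax) = max_{i,j} τ(Ãⁱ_j) + max_{i,j} τ((Ã⁻¹)ⁱ_j)` for `Ã = G⁻¹AG`)
is attained and equals `τ(λ₁/λ_{n+1})`. -/
theorem translation_length_eq_spectral {K : Type*} [Field K] [IsAlgClosed K]
    (ι : ℂ →+* K) (τ : K → WithBot ℝ)
    (hzero : ∀ z : K, τ z = ⊥ ↔ z = 0)
    (hmul : ∀ z w : K, τ (z * w) = τ z + τ w)
    (hadd : ∀ z w : K, τ (z + w) ≤ max (τ z) (τ w))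
    (hsurj : Function.Surjective τ)
    (n : ℕ) (A : Matrix (Fin (n + 1)) (Fin (n + 1)) K) (hA : IsUnit A.det)
    (lam : Fin (n + 1) → K)
    (hchar : A.charpoly = ∏ i, (Polynomial.X - Polynomial.C (lam i)))
    (hord : Antitone fun i => τ (lam i)) :
    IsLeast
      {d : WithBot ℝ | ∃ G : Matrix (Fin (n + 1)) (Fin (n + 1)) K, IsUnit G.det ∧
        d = (Finset.univ.sup fun p : Fin (n + 1) × Fin (n + 1) =>
              τ ((G⁻¹ * A * G) p.1 p.2)) +
            (Finset.univ.sup fun p : Fin (n + 1) × Fin (n + 1) =>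
              τ ((G⁻¹ * A⁻¹ * G) p.1 p.2))}
      (τ (lam 0 / lam (Fin.last n))) := by
  classical
  have hlam_ne : ∀ i, lam i ≠ 0 := by
    intro i hi
    have hdet0 : A.charpoly.coeff 0 = 0 := by
      rw [Polynomial.coeff_zero_eq_eval_zero, hchar, Polynomial.eval_prod]
      exact Finset.prod_eq_zero (mem_univ i) (by simp [hi])
    have hd := Matrix.det_eq_sign_charpoly_coeff A
    rw [hdet0, mul_zero] at hd
    rw [hd] at hA
    simp at hA
  obtain ⟨r0, hr0⟩ : ∃ r : ℝ, τ (lam 0) = (r : WithBot ℝ) := by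
    cases h : τ (lam 0) with
    | bot => exact absurd ((hzero _).1 h) (hlam_ne 0)
    | coe r => exact ⟨r, rfl⟩
  obtain ⟨rl, hrl⟩ : ∃ r : ℝ, τ (lam (Fin.last n)) = (r : WithBot ℝ) := by
    cases h : τ (lam (Fin.last n)) with
    | bot => exact absurd ((hzero _).1 h) (hlam_ne _)
    | coe r => exact ⟨r, rfl⟩
  have htarget : τ (lam 0 / lam (Fin.last n)) = ((r0 - rl : ℝ) : WithBot ℝ) := by
    rw [div_eq_mul_inv, hmul, hr0, tau_inv τ hzero hmul (hlam_ne _) hrl,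
      ← WithBot.coe_add, WithBot.coe_inj]
    ring
  -- lower bound, for an arbitrary base point G
  have hlow : ∀ G : Matrix (Fin (n+1)) (Fin (n+1)) K, IsUnit G.det →
      τ (lam 0 / lam (Fin.last n)) ≤
        (univ.sup fun p : Fin (n + 1) × Fin (n + 1) => τ ((G⁻¹ * A * G) p.1 p.2)) +
        (univ.sup fun p : Fin (n + 1) × Fin (n + 1) => τ ((G⁻¹ * A⁻¹ * G) p.1 p.2)) := by
    intro G hG
    have hTright : (G⁻¹ * A * G) * (G⁻¹ * A⁻¹ * G) = 1 := by
      simp only [Matrix.mul_assoc]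
      rw [Matrix.mul_nonsing_inv_cancel_left G (A⁻¹ * G) hG,
        Matrix.mul_nonsing_inv_cancel_left A G hA, Matrix.nonsing_inv_mul G hG]
    have hTdetu : IsUnit (G⁻¹ * A * G).det := Matrix.isUnit_det_of_right_inverse hTright
    have hTinv : (G⁻¹ * A * G)⁻¹ = G⁻¹ * A⁻¹ * G := Matrix.inv_eq_right_inv hTright
    have hcharT : (G⁻¹ * A * G).charpoly = A.charpoly := charpoly_conj G A hG
    have hroot0 : (G⁻¹ * A * G).charpoly.eval (lam 0) = 0 := by
      rw [hcharT, hchar, Polynomial.eval_prod]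
      exact Finset.prod_eq_zero (mem_univ 0) (by simp)
    obtain ⟨v, hv, hveig⟩ := exists_eigen (G⁻¹ * A * G) hroot0
    have h1 : τ (lam 0) ≤
        univ.sup (fun p : Fin (n+1) × Fin (n+1) => τ ((G⁻¹ * A * G) p.1 p.2)) :=
      tau_eig_le τ hzero hmul hadd _ (lam 0) v hv hveig
    have hrootl : (G⁻¹ * A * G).charpoly.eval (lam (Fin.last n)) = 0 := by
      rw [hcharT, hchar, Polynomial.eval_prod]
      exact Finset.prod_eq_zero (mem_univ (Fin.last n)) (by simp)
    obtain ⟨w, hw, hweig⟩ := exists_eigen (G⁻¹ * A * G) hrootl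
    have hwinv : (G⁻¹ * A * G)⁻¹.mulVec w = (lam (Fin.last n))⁻¹ • w := by
      have h2 : (G⁻¹ * A * G)⁻¹.mulVec ((G⁻¹ * A * G).mulVec w) = w := by
        rw [Matrix.mulVec_mulVec, Matrix.nonsing_inv_mul _ hTdetu, Matrix.one_mulVec]
      rw [hweig, Matrix.mulVec_smul] at h2
      calc (G⁻¹ * A * G)⁻¹.mulVec w
          = (lam (Fin.last n))⁻¹ • (lam (Fin.last n) • (G⁻¹ * A * G)⁻¹.mulVec w) :=
            (inv_smul_smul₀ (hlam_ne _) _).symm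
        _ = (lam (Fin.last n))⁻¹ • w := by rw [h2]
    rw [hTinv] at hwinv
    have h2 : τ ((lam (Fin.last n))⁻¹) ≤
        univ.sup (fun p : Fin (n+1) × Fin (n+1) => τ ((G⁻¹ * A⁻¹ * G) p.1 p.2)) :=
      tau_eig_le τ hzero hmul hadd _ _ w hw hwinv
    calc τ (lam 0 / lam (Fin.last n)) = τ (lam 0) + τ ((lam (Fin.last n))⁻¹) := by
          rw [div_eq_mul_inv, hmul]
      _ ≤ _ := add_le_add h1 h2
  -- construction of the optimal base point
  obtain ⟨G0, hG0, htri⟩ := exists_triangularize (n+1) A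
  obtain ⟨T, hT⟩ : ∃ T, T = G0⁻¹ * A * G0 := ⟨_, rfl⟩
  have hBT : T.BlockTriangular id := fun i j h => by rw [hT]; exact htri i j h
  have hTright : T * (G0⁻¹ * A⁻¹ * G0) = 1 := by
    rw [hT]
    simp only [Matrix.mul_assoc]
    rw [Matrix.mul_nonsing_inv_cancel_left G0 (A⁻¹ * G0) hG0,
      Matrix.mul_nonsing_inv_cancel_left A G0 hA, Matrix.nonsing_inv_mul G0 hG0]
  have hTdetu : IsUnit T.det := Matrix.isUnit_det_of_right_inverse hTright
  have hTinv : T⁻¹ = G0⁻¹ * A⁻¹ * G0 := Matrix.inv_eq_right_inv hTright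
  have hcharT : T.charpoly = A.charpoly := by rw [hT]; exact charpoly_conj G0 A hG0
  have hdiag : ∀ i, ∃ j, T i i = lam j := by
    intro i
    have h2 : T.charpoly = ∏ k, (X - C (T k k)) := Matrix.charpoly_of_upperTriangular T hBT
    have h3 : Polynomial.eval (T i i) (∏ k, (X - C (T k k))) = 0 := by
      rw [Polynomial.eval_prod]
      exact Finset.prod_eq_zero (mem_univ i) (by simp)
    rw [← h2, hcharT, hchar, Polynomial.eval_prod] at h3
    obtain ⟨j, -, hj⟩ := Finset.prod_eq_zero_iff.1 h3
    exact ⟨j, sub_eq_zero.1 (by simpa using hj)⟩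
  have hTinvBT : T⁻¹.BlockTriangular id := by
    have : Invertible T := T.invertibleOfIsUnitDet hTdetu
    exact Matrix.blockTriangular_inv_of_blockTriangular hBT
  have hdiaginv : ∀ i, T⁻¹ i i = (T i i)⁻¹ := by
    intro i
    have h1 : (T * T⁻¹) i i = 1 := by rw [Matrix.mul_nonsing_inv T hTdetu, Matrix.one_apply_eq]
    rw [Matrix.mul_apply] at h1
    rw [Finset.sum_eq_single i (fun k _ hk => by
      rcases lt_or_gt_of_ne hk with h | h
      · rw [hBT h, zero_mul]
      · rw [hTinvBT h, mul_zero]) (by simp)] at h1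
    exact eq_inv_of_mul_eq_one_right h1
  have hdiag_le : ∀ i, τ (T i i) ≤ (r0 : WithBot ℝ) := by
    intro i
    obtain ⟨j, hj⟩ := hdiag i
    rw [hj, ← hr0]
    exact hord (Fin.zero_le j)
  have hdiaginv_le : ∀ i, τ (T⁻¹ i i) ≤ ((-rl : ℝ) : WithBot ℝ) := by
    intro i
    obtain ⟨j, hj⟩ := hdiag i
    obtain ⟨rj, hrj⟩ : ∃ r : ℝ, τ (lam j) = (r : WithBot ℝ) := by
      cases h : τ (lam j) with
      | bot => exact absurd ((hzero _).1 h) (hlam_ne _)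
      | coe r => exact ⟨r, rfl⟩
    have hjl : rl ≤ rj := by
      have h5 := hord (Fin.le_last j)
      simp only at h5
      rw [hrl, hrj] at h5
      exact_mod_cast h5
    rw [hdiaginv i, hj, tau_inv τ hzero hmul (hlam_ne j) hrj]
    exact_mod_cast neg_le_neg hjl
  obtain ⟨cb, hcb⟩ : ∃ cbd : ℝ, ∀ i j : Fin (n+1),
      τ (T i j) ≤ (cbd : WithBot ℝ) ∧ τ (T⁻¹ i j) ≤ (cbd : WithBot ℝ) := by
    have hex : ∀ x : WithBot ℝ, ∃ cc : ℝ, x ≤ (cc : WithBot ℝ) := fun x => by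
      cases x with
      | bot => exact ⟨0, bot_le⟩
      | coe r => exact ⟨r, le_rfl⟩
    obtain ⟨c1, hc1⟩ := hex (univ.sup fun p : Fin (n+1) × Fin (n+1) => τ (T p.1 p.2))
    obtain ⟨c2, hc2⟩ := hex (univ.sup fun p : Fin (n+1) × Fin (n+1) => τ (T⁻¹ p.1 p.2))
    refine ⟨max c1 c2, fun i j => ⟨?_, ?_⟩⟩
    · exact le_trans (le_trans (Finset.le_sup
        (f := fun p : Fin (n+1) × Fin (n+1) => τ (T p.1 p.2)) (mem_univ (i, j))) hc1)
        (by exact_mod_cast le_max_left c1 c2)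
    · exact le_trans (le_trans (Finset.le_sup
        (f := fun p : Fin (n+1) × Fin (n+1) => τ (T⁻¹ p.1 p.2)) (mem_univ (i, j))) hc2)
        (by exact_mod_cast le_max_right c1 c2)
  obtain ⟨c, hc⟩ : ∃ c : ℝ, c = max 0 (max (cb - r0) (cb + rl)) := ⟨_, rfl⟩
  have hc0 : 0 ≤ c := hc ▸ le_max_left _ _
  have hc1 : cb - r0 ≤ c := hc ▸ le_trans (le_max_left _ _) (le_max_right _ _)
  have hc2 : cb + rl ≤ c := hc ▸ le_trans (le_max_right _ _) (le_max_right _ _)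
  choose t htt using fun i : Fin (n+1) => hsurj ((-(((i : ℕ)) : ℝ) * c : ℝ) : WithBot ℝ)
  have htne : ∀ i, t i ≠ 0 := by
    intro i h
    have h2 := htt i
    rw [h, (hzero 0).2 rfl] at h2
    exact absurd h2.symm WithBot.coe_ne_bot
  have htinv : ∀ i, τ (t i)⁻¹ = ((((i : ℕ) : ℝ) * c : ℝ) : WithBot ℝ) := by
    intro i
    have he : (-(-(((i : ℕ)) : ℝ) * c)) = ((i : ℕ) : ℝ) * c := by ring
    rw [tau_inv τ hzero hmul (htne i) (htt i), he]
  obtain ⟨D, hD⟩ : ∃ D, D = Matrix.diagonal t := ⟨_, rfl⟩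
  have hDdet : IsUnit D.det := by
    rw [hD, Matrix.det_diagonal]
    exact isUnit_iff_ne_zero.2 (Finset.prod_ne_zero_iff.2 fun i _ => htne i)
  have hDinv : D⁻¹ = Matrix.diagonal (fun i => (t i)⁻¹) := by
    refine Matrix.inv_eq_right_inv ?_
    rw [hD, Matrix.diagonal_mul_diagonal]
    rw [show (fun i => t i * (t i)⁻¹) = fun _ => (1 : K) from
      funext fun i => mul_inv_cancel₀ (htne i), Matrix.diagonal_one]
  have hGdet : IsUnit (G0 * D).det := by rw [Matrix.det_mul]; exact hG0.mul hDdet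
  have hGinv : (G0 * D)⁻¹ = D⁻¹ * G0⁻¹ := Matrix.mul_inv_rev G0 D
  have hconj1 : (G0 * D)⁻¹ * A * (G0 * D) = D⁻¹ * T * D := by
    rw [hGinv, hT]
    noncomm_ring
  have hconj2 : (G0 * D)⁻¹ * A⁻¹ * (G0 * D) = D⁻¹ * T⁻¹ * D := by
    rw [hGinv, hTinv]
    noncomm_ring
  have hent : ∀ (X : Matrix (Fin (n+1)) (Fin (n+1)) K) (i j : Fin (n+1)),
      (D⁻¹ * X * D) i j = (t i)⁻¹ * X i j * t j := by
    intro X i j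
    rw [hDinv, hD, Matrix.mul_diagonal, Matrix.diagonal_mul]
  have hbound : ∀ (X : Matrix (Fin (n+1)) (Fin (n+1)) K) (ρ : ℝ),
      X.BlockTriangular id → (∀ i, τ (X i i) ≤ (ρ : WithBot ℝ)) →
      (∀ i j, τ (X i j) ≤ (cb : WithBot ℝ)) → cb - ρ ≤ c →
      (univ.sup fun p : Fin (n + 1) × Fin (n + 1) => τ ((D⁻¹ * X * D) p.1 p.2))
        ≤ (ρ : WithBot ℝ) := by
    intro X ρ hXtri hXdiag hXcb hcρ
    refine Finset.sup_le ?_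
    rintro ⟨i, j⟩ -
    rw [hent]
    rcases lt_trichotomy i j with hij | hij | hij
    · rcases eq_or_ne (X i j) 0 with h0 | h0
      · have hz : (t i)⁻¹ * X i j * t j = 0 := by rw [h0]; ring
        rw [hz, (hzero 0).2 rfl]
        exact bot_le
      · obtain ⟨bb, hbb⟩ : ∃ b : ℝ, τ (X i j) = (b : WithBot ℝ) := by
          cases h : τ (X i j) with
          | bot => exact absurd ((hzero _).1 h) h0
          | coe r => exact ⟨r, rfl⟩
        have hbcb : bb ≤ cb := by
          have := hXcb i j
          rw [hbb] at this
          exact_mod_cast this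
        rw [hmul, hmul, htinv i, hbb, htt j, ← WithBot.coe_add, ← WithBot.coe_add,
          WithBot.coe_le_coe]
        have hnat : (i : ℕ) < (j : ℕ) := hij
        have hij' : ((i : ℕ) : ℝ) + 1 ≤ ((j : ℕ) : ℝ) := by exact_mod_cast hnat
        nlinarith [mul_nonneg (by linarith : (0:ℝ) ≤ ((j : ℕ) : ℝ) - ((i : ℕ) : ℝ) - 1) hc0]
    · subst hij
      have he : (t i)⁻¹ * X i i * t i = X i i := by
        rw [mul_comm ((t i)⁻¹) (X i i), mul_assoc, inv_mul_cancel₀ (htne i), mul_one]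
      rw [he]
      exact hXdiag i
    · have h0 : X i j = 0 := hXtri hij
      have hz : (t i)⁻¹ * X i j * t j = 0 := by rw [h0]; ring
      rw [hz, (hzero 0).2 rfl]
      exact bot_le
  have hb1 : (univ.sup fun p : Fin (n + 1) × Fin (n + 1) =>
      τ (((G0 * D)⁻¹ * A * (G0 * D)) p.1 p.2)) ≤ (r0 : WithBot ℝ) := by
    rw [hconj1]
    exact hbound T r0 hBT hdiag_le (fun i j => (hcb i j).1) hc1
  have hb2 : (univ.sup fun p : Fin (n + 1) × Fin (n + 1) =>
      τ (((G0 * D)⁻¹ * A⁻¹ * (G0 * D)) p.1 p.2)) ≤ ((-rl : ℝ) : WithBot ℝ) := by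
    rw [hconj2]
    exact hbound T⁻¹ (-rl) hTinvBT hdiaginv_le (fun i j => (hcb i j).2) (by linarith)
  constructor
  · refine ⟨G0 * D, hGdet, ?_⟩
    have hle : (univ.sup fun p : Fin (n + 1) × Fin (n + 1) =>
          τ (((G0 * D)⁻¹ * A * (G0 * D)) p.1 p.2)) +
        (univ.sup fun p : Fin (n + 1) × Fin (n + 1) =>
          τ (((G0 * D)⁻¹ * A⁻¹ * (G0 * D)) p.1 p.2)) ≤ τ (lam 0 / lam (Fin.last n)) := by
      rw [htarget]
      calc _ ≤ ((r0 : WithBot ℝ) + ((-rl : ℝ) : WithBot ℝ)) := add_le_add hb1 hb2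
        _ = ((r0 - rl : ℝ) : WithBot ℝ) := by
            rw [← WithBot.coe_add, WithBot.coe_inj]
            ring
    exact (le_antisymm hle (hlow (G0 * D) hGdet)).symm
  · rintro d ⟨G', hG', rfl⟩
    exact hlow G' hG'
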